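/- arXiv:1907.11875 — 4 statements merged into one kernel-verified Lean document; each statement's English description precedes it below -/
import Mathlib

section
/- If the parameters ū = {u_1,...,u_n} satisfy the Bethe equations λ_1(u_j)/λ_2(u_j) = ∏_{i≠j} f(u_j,u_i) / ∏_{i≠j} f(u_i,u_j) for all j, then the residue of τ(z|ū) at each z = u_j vanishes; equivalently, (z - u_j)·τ(z|ū) → 0 as z → u_j for every j. -/
/-!
Split off the factor `i = j` from both products. Near `u_j` one has
`(z - u_j) f(u_j, z) → -c` and `(z - u_j) f(z, u_j) → c`, while the remaining factors are
regular, so `(z - u_j) τ(z|ū) → c (λ₂(u_j) f(u_j, ū_j) - λ₁(u_j) f(ū_j, u_j))`, which is zero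
precisely by the Bethe equation for `u_j`.
-/

open Finset Filter Topology

section SimplePole

variable {𝕜 : Type*} [Field 𝕜] [TopologicalSpace 𝕜] [IsTopologicalDivisionRing 𝕜]

theorem tendsto_sub_mul_add_of_simple_poles {a b : 𝕜 → 𝕜} {w : 𝕜} (c : 𝕜)
    (ha : ContinuousAt a w) (hb : ContinuousAt b w) :
    Tendsto (fun z => (z - w) * (a z * ((w - z + c) / (w - z)) + b z * ((z - w + c) / (z - w))))
      (𝓝[≠] w) (𝓝 (c * (b w - a w))) := by
  have hcont : ContinuousAt (fun z => b z * (z - w + c) - a z * (w - z + c)) w := by fun_prop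
  have hval : b w * (w - w + c) - a w * (w - w + c) = c * (b w - a w) := by ring
  rw [← hval]
  refine (hcont.tendsto.mono_left nhdsWithin_le_nhds).congr' ?_
  filter_upwards [self_mem_nhdsWithin] with z (hz : z ≠ w)
  have hzw : z - w ≠ 0 := sub_ne_zero.mpr hz
  have hwz : w - z ≠ 0 := sub_ne_zero.mpr hz.symm
  field_simp
  ring

theorem continuousAt_prod_div_sub_left {ι : Type*} (s : Finset ι) (v : ι → 𝕜) (c : 𝕜) {w : 𝕜}
    (hv : ∀ i ∈ s, v i ≠ w) :
    ContinuousAt (fun z => ∏ i ∈ s, (v i - z + c) / (v i - z)) w :=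
  tendsto_finsetProd _ fun i hi =>
    ContinuousAt.div (by fun_prop) (by fun_prop) (sub_ne_zero.mpr (hv i hi))

theorem continuousAt_prod_div_sub_right {ι : Type*} (s : Finset ι) (v : ι → 𝕜) (c : 𝕜) {w : 𝕜}
    (hv : ∀ i ∈ s, v i ≠ w) :
    ContinuousAt (fun z => ∏ i ∈ s, (z - v i + c) / (z - v i)) w :=
  tendsto_finsetProd _ fun i hi =>
    ContinuousAt.div (by fun_prop) (by fun_prop) (sub_ne_zero.mpr (hv i hi).symm)

end SimplePole

theorem residue_vanishes_of_bethe_general (c : ℂ) (n : ℕ) (u : Fin n → ℂ)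
    (hu : Function.Injective u)
    (hdiff : ∀ i j : Fin n, i ≠ j → u i - u j ≠ c ∧ u i - u j ≠ -c)
    (l1 l2 : ℂ → ℂ)
    (hreg1 : ∀ j, ContinuousAt l1 (u j)) (hreg2 : ∀ j, ContinuousAt l2 (u j))
    (hnz2 : ∀ j, l2 (u j) ≠ 0)
    (hBethe : ∀ j : Fin n, l1 (u j) / l2 (u j) =
      (∏ i ∈ univ.erase j, ((u j - u i + c) / (u j - u i))) /
      (∏ i ∈ univ.erase j, ((u i - u j + c) / (u i - u j)))) :
    ∀ j : Fin n,
      Tendsto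
        (fun z : ℂ => (z - u j) *
          (l1 z * ∏ i, ((u i - z + c) / (u i - z)) +
           l2 z * ∏ i, ((z - u i + c) / (z - u i))))
        (nhdsWithin (u j) {u j}ᶜ) (nhds 0) := by
  intro j
  have hne : ∀ i ∈ univ.erase j, u i ≠ u j := fun i hi => hu.ne (ne_of_mem_erase hi)
  have hden : ∏ i ∈ univ.erase j, ((u i - u j + c) / (u i - u j)) ≠ 0 :=
    prod_ne_zero_iff.mpr fun i hi => div_ne_zero
      (fun h => (hdiff i j (ne_of_mem_erase hi)).2 (eq_neg_of_add_eq_zero_left h))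
      (sub_ne_zero.mpr (hne i hi))
  have hlim := tendsto_sub_mul_add_of_simple_poles c
    ((hreg1 j).fun_mul (continuousAt_prod_div_sub_left (univ.erase j) u c hne))
    ((hreg2 j).fun_mul (continuousAt_prod_div_sub_right (univ.erase j) u c hne))
  have hres : c * (l2 (u j) * ∏ i ∈ univ.erase j, ((u j - u i + c) / (u j - u i)) -
      l1 (u j) * ∏ i ∈ univ.erase j, ((u i - u j + c) / (u i - u j))) = 0 := by
    linear_combination -c * (div_eq_div_iff (hnz2 j) hden).mp (hBethe j)
  rw [hres] at hlim
  refine hlim.congr fun z => ?_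
  simp only [← prod_erase_mul univ _ (mem_univ j)]
  ring

/-- If the parameters `ū` satisfy the Bethe equations
`λ₁(u_j)/λ₂(u_j) = ∏_{i≠j} f(u_j,u_i) / ∏_{i≠j} f(u_i,u_j)`,
then the residue of `τ(z|ū)` at every `z = u_j` vanishes, i.e.
`(z - u_j)·τ(z|ū) → 0` as `z → u_j`. -/
theorem residue_vanishes_of_bethe (c : ℂ) (hc : c ≠ 0) (n : ℕ) (u : Fin n → ℂ)
    (hu : Function.Injective u)
    (hdiff : ∀ i j : Fin n, i ≠ j → u i - u j ≠ c ∧ u i - u j ≠ -c)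
    (l1 l2 : ℂ → ℂ)
    (hreg1 : ∀ j, ContinuousAt l1 (u j)) (hreg2 : ∀ j, ContinuousAt l2 (u j))
    (hnz1 : ∀ j, l1 (u j) ≠ 0) (hnz2 : ∀ j, l2 (u j) ≠ 0)
    (hBethe : ∀ j : Fin n, l1 (u j) / l2 (u j) =
      (∏ i ∈ univ.erase j, ((u j - u i + c) / (u j - u i))) /
      (∏ i ∈ univ.erase j, ((u i - u j + c) / (u i - u j)))) :
    ∀ j : Fin n,
      Tendsto
        (fun z : ℂ => (z - u j) *
          (l1 z * ∏ i, ((u i - z + c) / (u i - z)) +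
           l2 z * ∏ i, ((z - u i + c) / (z - u i))))
        (nhdsWithin (u j) {u j}ᶜ) (nhds 0) :=
  residue_vanishes_of_bethe_general c n u hu hdiff l1 l2 hreg1 hreg2 hnz2 hBethe
end

section
/- With J(u,x_k) = λ_2(u)·t(u,x_k)·∏_{ℓ=1}^n h(u,x_ℓ) + (−1)^{n−1}·λ_1(u)·t(x_k,u)·∏_{ℓ=1}^n h(x_ℓ,u), one has, for each k, the identity J(u_j,x_k) = (c / ∏_{ℓ=1}^n g(u_j,x_ℓ)) · ∂τ(u_j|x̄)/∂x_k, where τ(u|x̄) = λ_1(u)·∏_ℓ f(x_ℓ,u) + λ_2(u)·∏_ℓ f(u,x_ℓ) and λ_1, λ_2 are treated as constants in the differentiation. -/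
/-!
Only the `k`-th factors of `τ(u|x̄)` depend on `x_k`, and `c · ∂_v f(u,v) = c²/(u-v)² = g(u,v)²`.
As `f = g·h` and `g = t·h`, the prefactor `c / ∏ g(u,x_ℓ)` cancels every `g` in the derivative
of `λ₂ ∏ f(u,x_ℓ)`, leaving `λ₂ t(u,x_k) ∏ h(u,x_ℓ)`. The `λ₁` term is the same computation in
the variables `x_ℓ - u`; the sign `(-1)^(n-1)` comes from `g(u,v) = -g(v,u)` in the prefactor
and `c · ∂_v f(v,u) = -g(v,u)²`.
-/

open Finset Function

theorem hasDerivAt_prod_update {𝕜 𝔸 ι : Type*} [NontriviallyNormedField 𝕜] [NormedCommRing 𝔸]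
    [NormedAlgebra 𝕜 𝔸] [Fintype ι] [DecidableEq ι] {φ : 𝕜 → 𝔸} {φ' : 𝔸} (x : ι → 𝕜) (k : ι)
    (hφ : HasDerivAt φ φ' (x k)) :
    HasDerivAt (fun w => ∏ i, φ (update x k w i)) (φ' * ∏ i ∈ univ.erase k, φ (x i)) (x k) := by
  have hsplit :
      (fun w => ∏ i, φ (update x k w i)) = fun w => φ w * ∏ i ∈ univ.erase k, φ (x i) := by
    funext w
    rw [← mul_prod_erase univ _ (mem_univ k), update_self]
    exact congrArg _ <| prod_congr rfl fun i hi => by rw [update_of_ne (ne_of_mem_erase hi)]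
  rw [hsplit]
  exact hφ.mul_const _

section Ratio

variable {𝕜 : Type*} [NontriviallyNormedField 𝕜] (c : 𝕜) {u x : 𝕜}

theorem hasDerivAt_sub_add_div_sub (hx : x ≠ u) :
    HasDerivAt (fun w => (w - u + c) / (w - u)) (-c / (x - u) ^ 2) x := by
  have hden := (hasDerivAt_id x).sub_const u
  refine ((hden.add_const c).div hden (sub_ne_zero.2 hx)).congr_deriv ?_
  simp only [id]
  ring

theorem hasDerivAt_const_sub_add_div_const_sub (hx : u ≠ x) :
    HasDerivAt (fun w => (u - w + c) / (u - w)) (c / (u - x) ^ 2) x := by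
  have hden := (hasDerivAt_id x).const_sub u
  refine ((hden.add_const c).div hden (sub_ne_zero.2 hx)).congr_deriv ?_
  simp only [id]
  ring

end Ratio

theorem div_prod_div_mul_sq_mul_prod_erase {K ι : Type*} [Field K] [Fintype ι] [DecidableEq ι]
    (c : K) {a : ι → K} (ha : ∀ i, a i ≠ 0) {k : ι} (hk : a k + c ≠ 0) :
    (c / ∏ i, c / a i) * (c / a k ^ 2 * ∏ i ∈ univ.erase k, (a i + c) / a i)
      = c ^ 2 / (a k * (a k + c)) * ∏ i, (a i + c) / c := by
  have hP : ∏ i ∈ univ.erase k, a i ≠ 0 := prod_ne_zero_iff.2 fun i _ => ha i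
  rw [prod_div_distrib, prod_div_distrib, prod_div_distrib, prod_const,
    ← mul_prod_erase univ a (mem_univ k), ← mul_prod_erase univ (fun i => a i + c) (mem_univ k)]
  field_simp [ha k]

theorem div_prod_div_sub_comm {K ι : Type*} [Field K] (s : Finset ι) (c u : K) (x : ι → K) :
    c / ∏ i ∈ s, c / (u - x i) = (-1) ^ #s * (c / ∏ i ∈ s, c / (x i - u)) := by
  simp_rw [← neg_sub (x _) u, div_neg, prod_neg]
  rw [div_mul_eq_div_div_swap, div_eq_mul_inv _ ((-1 : K) ^ _), ← inv_pow, inv_neg_one, mul_comm]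

theorem J_eq_deriv_tau_general (c : ℂ) (n : ℕ) (x : Fin n → ℂ)
    (uj : ℂ)
    (hux : ∀ ℓ, uj ≠ x ℓ)
    (hdiff : ∀ ℓ, uj - x ℓ ≠ c ∧ uj - x ℓ ≠ -c)
    (l1 l2 : ℂ) (k : Fin n) :
    l2 * (c ^ 2 / ((uj - x k) * (uj - x k + c))) * ∏ ℓ, ((uj - x ℓ + c) / c)
      + (-1 : ℂ) ^ (n - 1) * l1 * (c ^ 2 / ((x k - uj) * (x k - uj + c)))
          * ∏ ℓ, ((x ℓ - uj + c) / c)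
    = (c / ∏ ℓ, (c / (uj - x ℓ))) *
      deriv (fun w : ℂ =>
        l1 * ∏ ℓ, ((Function.update x k w ℓ - uj + c) / (Function.update x k w ℓ - uj))
        + l2 * ∏ ℓ, ((uj - Function.update x k w ℓ + c) / (uj - Function.update x k w ℓ)))
        (x k) := by
  have hF := hasDerivAt_prod_update x k (hasDerivAt_sub_add_div_sub c (hux k).symm)
  have hG := hasDerivAt_prod_update x k (hasDerivAt_const_sub_add_div_const_sub c (hux k))
  rw [((hF.const_mul l1).fun_add (hG.const_mul l2)).deriv]
  have hG_term := div_prod_div_mul_sq_mul_prod_erase c (a := fun i => uj - x i)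
    (fun i => sub_ne_zero.2 (hux i)) (k := k) fun h => (hdiff k).2 (eq_neg_of_add_eq_zero_left h)
  have hF_term := div_prod_div_mul_sq_mul_prod_erase c (a := fun i => x i - uj)
    (fun i => sub_ne_zero.2 (hux i).symm) (k := k)
    fun h => (hdiff k).1 (by linear_combination -h)
  have hsign := div_prod_div_sub_comm univ c uj x
  obtain ⟨m, rfl⟩ : ∃ m, n = m + 1 := Nat.exists_eq_add_one_of_ne_zero k.pos.ne'
  rw [card_univ, Fintype.card_fin] at hsign
  rw [Nat.add_sub_cancel]
  linear_combination -l2 * hG_term - (-1) ^ m * l1 * hF_term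
    - l1 * (-c / (x k - uj) ^ 2 * ∏ i ∈ univ.erase k, (x i - uj + c) / (x i - uj)) * hsign

/-- With `J(u,x_k) = λ₂(u)·t(u,x_k)·∏ₗ h(u,x_ℓ) + (−1)^{n−1}·λ₁(u)·t(x_k,u)·∏ₗ h(x_ℓ,u)`,
one has `J(u_j,x_k) = (c / ∏ₗ g(u_j,x_ℓ)) · ∂τ(u_j|x̄)/∂x_k`, where
`τ(u|x̄) = λ₁(u)·∏ₗ f(x_ℓ,u) + λ₂(u)·∏ₗ f(u,x_ℓ)` and `λ₁, λ₂` are constants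
in the differentiation.  Here `g(u,v) = c/(u-v)`, `h(u,v) = (u-v+c)/c`,
`t(u,v) = c²/((u-v)(u-v+c))`, `f(u,v) = (u-v+c)/(u-v)`. -/
theorem J_eq_deriv_tau (c : ℂ) (hc : c ≠ 0) (n : ℕ) (x : Fin n → ℂ)
    (hx : Function.Injective x) (uj : ℂ)
    (hux : ∀ ℓ, uj ≠ x ℓ)
    (hdiff : ∀ ℓ, uj - x ℓ ≠ c ∧ uj - x ℓ ≠ -c)
    (l1 l2 : ℂ) (k : Fin n) :
    l2 * (c ^ 2 / ((uj - x k) * (uj - x k + c))) * ∏ ℓ, ((uj - x ℓ + c) / c)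
      + (-1 : ℂ) ^ (n - 1) * l1 * (c ^ 2 / ((x k - uj) * (x k - uj + c)))
          * ∏ ℓ, ((x ℓ - uj + c) / c)
    = (c / ∏ ℓ, (c / (uj - x ℓ))) *
      deriv (fun w : ℂ =>
        l1 * ∏ ℓ, ((Function.update x k w ℓ - uj + c) / (Function.update x k w ℓ - uj))
        + l2 * ∏ ℓ, ((uj - Function.update x k w ℓ + c) / (uj - Function.update x k w ℓ)))
        (x k) :=
  J_eq_deriv_tau_general c n x uj hux hdiff l1 l2 k
end

section
/- Suppose A is an associative (noncommutative) ring and T_{11}, T_{12}, T_{21}, T_{22} : ℂ → A are operator-valued functions satisfying the gl(2) RTT relations for the rational R-matrix R(u,v) = 1 + g(u,v)P. Then the transfer matrix t(u) = T_{11}(u) + T_{22}(u) satisfies [t(u), t(v)] = 0 for all u ≠ v. -/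
/-!
Taking the trace of the RTT relation over `ℂ² ⊗ ℂ²` gives
`t(u) t(v) + g(u,v) tr(T(u) T(v)) = t(v) t(u) + g(u,v) tr(T(v) T(u))`:
`tr(T⁽¹⁾ T⁽²⁾) = t(u) t(v)`, while the permutation `P` contracts the double trace of
`P T⁽¹⁾ T⁽²⁾` to the single trace of the product. As `g(v,u) = -g(u,v)`, subtracting the
relation for `(v,u)` from the one for `(u,v)` leaves `2 [t(u), t(v)] = 0`.
-/

namespace Stmt12

/-- The permutation operator `P` on `ℂ²⊗ℂ²`, written as a matrix indexed by
`Fin 2 × Fin 2`. -/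
def P : Matrix (Fin 2 × Fin 2) (Fin 2 × Fin 2) ℂ :=
  fun p q => if p.1 = q.2 ∧ p.2 = q.1 then 1 else 0

/-- The rational `gl(2)` R-matrix `R(u,v) = 1 + g(u,v)·P` with `g(u,v) = c/(u-v)`. -/
noncomputable def R (c u v : ℂ) : Matrix (Fin 2 × Fin 2) (Fin 2 × Fin 2) ℂ :=
  1 + (c / (u - v)) • P

/-- `T⁽¹⁾ = T ⊗ 1`. -/
def T1 {A : Type*} [Ring A] (T : Matrix (Fin 2) (Fin 2) A) :
    Matrix (Fin 2 × Fin 2) (Fin 2 × Fin 2) A :=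
  fun p q => if p.2 = q.2 then T p.1 q.1 else 0

/-- `T⁽²⁾ = 1 ⊗ T`. -/
def T2 {A : Type*} [Ring A] (T : Matrix (Fin 2) (Fin 2) A) :
    Matrix (Fin 2 × Fin 2) (Fin 2 × Fin 2) A :=
  fun p q => if p.1 = q.1 then T p.2 q.2 else 0

open Matrix

section
variable {A : Type*} [Ring A]

theorem T1_mul_T2_apply (X Y : Matrix (Fin 2) (Fin 2) A) (i j k l : Fin 2) :
    (T1 X * T2 Y) (i, j) (k, l) = X i k * Y j l := by
  simp [mul_apply, Fintype.sum_prod_type, T1, T2]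

theorem T2_mul_T1_apply (X Y : Matrix (Fin 2) (Fin 2) A) (i j k l : Fin 2) :
    (T2 Y * T1 X) (i, j) (k, l) = Y j l * X i k := by
  simp [mul_apply, Fintype.sum_prod_type, T1, T2]

theorem trace_T1_mul_T2 (X Y : Matrix (Fin 2) (Fin 2) A) :
    (T1 X * T2 Y).trace = X.trace * Y.trace := by
  simp only [trace, diag_apply, Fintype.sum_prod_type, T1_mul_T2_apply, Fin.sum_univ_two]
  noncomm_ring

theorem trace_T2_mul_T1 (X Y : Matrix (Fin 2) (Fin 2) A) :
    (T2 Y * T1 X).trace = Y.trace * X.trace := by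
  simp only [trace, diag_apply, Fintype.sum_prod_type, T2_mul_T1_apply, Fin.sum_univ_two]
  noncomm_ring

variable [Algebra ℂ A]

theorem trace_P_mul (M : Matrix (Fin 2 × Fin 2) (Fin 2 × Fin 2) A) :
    (P.map (algebraMap ℂ A) * M).trace = ∑ i, ∑ j, M (j, i) (i, j) := by
  simp [trace, mul_apply, Fintype.sum_prod_type, P]

theorem trace_mul_P (M : Matrix (Fin 2 × Fin 2) (Fin 2 × Fin 2) A) :
    (M * P.map (algebraMap ℂ A)).trace = ∑ i, ∑ j, M (i, j) (j, i) := by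
  simp [trace, mul_apply, Fintype.sum_prod_type, P]

theorem trace_P_mul_T1_mul_T2 (X Y : Matrix (Fin 2) (Fin 2) A) :
    (P.map (algebraMap ℂ A) * T1 X * T2 Y).trace = (X * Y).trace := by
  rw [Matrix.mul_assoc, trace_P_mul]
  simp only [T1_mul_T2_apply]
  exact Finset.sum_comm

theorem trace_T2_mul_T1_mul_P (X Y : Matrix (Fin 2) (Fin 2) A) :
    (T2 Y * T1 X * P.map (algebraMap ℂ A)).trace = (Y * X).trace := by
  rw [trace_mul_P]
  simp only [T2_mul_T1_apply]
  exact Finset.sum_comm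

theorem map_R (c u v : ℂ) :
    (R c u v).map (algebraMap ℂ A) = 1 + (c / (u - v)) • P.map (algebraMap ℂ A) := by
  rw [R, Matrix.map_add, Matrix.map_one _ (map_zero _) (map_one _),
    Matrix.map_smul _ _ fun a => by rw [smul_eq_mul, map_mul, Algebra.smul_def]]
  exact fun _ _ => map_add _ _ _

theorem trace_mul_trace_add_smul_eq_of_RTT {c u v : ℂ} {X Y : Matrix (Fin 2) (Fin 2) A}
    (h : (R c u v).map (algebraMap ℂ A) * T1 X * T2 Y =
      T2 Y * T1 X * (R c u v).map (algebraMap ℂ A)) :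
    X.trace * Y.trace + (c / (u - v)) • (X * Y).trace =
      Y.trace * X.trace + (c / (u - v)) • (Y * X).trace := by
  have htr := congrArg Matrix.trace h
  rw [map_R, add_mul, add_mul, one_mul, smul_mul, smul_mul, mul_add, mul_one, Matrix.mul_smul,
    trace_add, trace_add, trace_smul, trace_smul, trace_T1_mul_T2, trace_T2_mul_T1,
    trace_P_mul_T1_mul_T2, trace_T2_mul_T1_mul_P] at htr
  exact htr

end

theorem transfer_matrices_commute_general {A : Type*} [Ring A] [Algebra ℂ A]
    (c : ℂ) (T : ℂ → Matrix (Fin 2) (Fin 2) A)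
    (hRTT : ∀ u v : ℂ, u ≠ v →
      (R c u v).map (algebraMap ℂ A) * T1 (T u) * T2 (T v) =
        T2 (T v) * T1 (T u) * (R c u v).map (algebraMap ℂ A)) :
    ∀ u v : ℂ, u ≠ v →
      (T u 0 0 + T u 1 1) * (T v 0 0 + T v 1 1) =
        (T v 0 0 + T v 1 1) * (T u 0 0 + T u 1 1) := by
  intro u v huv
  have h_uv := trace_mul_trace_add_smul_eq_of_RTT (hRTT u v huv)
  have h_vu := trace_mul_trace_add_smul_eq_of_RTT (hRTT v u huv.symm)
  rw [← neg_sub u v, div_neg] at h_vu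
  have h2 : (2 : ℂ) • ((T u).trace * (T v).trace - (T v).trace * (T u).trace) = 0 := by
    linear_combination (norm := module) h_uv - h_vu
  simpa [sub_eq_zero, trace_fin_two] using h2

/-- If the operator-valued monodromy matrix `T(u)` satisfies the RTT relation
`R(u,v)·T⁽¹⁾(u)·T⁽²⁾(v) = T⁽²⁾(v)·T⁽¹⁾(u)·R(u,v)` for the rational R-matrix,
then the transfer matrices `t(u) = T₁₁(u) + T₂₂(u)` commute: `[t(u),t(v)] = 0`. -/
theorem transfer_matrices_commute {A : Type*} [Ring A] [Algebra ℂ A]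
    (c : ℂ) (hc : c ≠ 0) (T : ℂ → Matrix (Fin 2) (Fin 2) A)
    (hRTT : ∀ u v : ℂ, u ≠ v →
      (R c u v).map (algebraMap ℂ A) * T1 (T u) * T2 (T v) =
        T2 (T v) * T1 (T u) * (R c u v).map (algebraMap ℂ A)) :
    ∀ u v : ℂ, u ≠ v →
      (T u 0 0 + T u 1 1) * (T v 0 0 + T v 1 1) =
        (T v 0 0 + T v 1 1) * (T u 0 0 + T u 1 1) :=
  transfer_matrices_commute_general c T hRTT

end Stmt12
end

section
/- Let ū = {u_1,...,u_n} with all u_i, −u_i, u_i ± u_j pairwise distinct and nonzero, avoiding ±c, and let λ_1, λ_2 be functions regular at ±u_j. Define the reflection transfer-matrix eigenvalue τ̂(z|ū) as in the context. Then τ̂(z|ū) has a simple pole at z = u_j, and if the reflection Bethe equations hold at each u_j, then the residue of τ̂(z|ū) at z = u_j vanishes for every j. -/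
open Finset Filter

namespace Stmt13

noncomputable def f (c u v : ℂ) : ℂ := (u - v + c) / (u - v)

/-- The reflection transfer-matrix eigenvalue `τ̂(z|ū)`. -/
noncomputable def tauhat (c ξp ξm : ℂ) (l1 l2 : ℂ → ℂ) {n : ℕ}
    (u : Fin n → ℂ) (z : ℂ) : ℂ :=
  ((2 * z + c) / (2 * z)) * (z + ξp - c / 2) * (z + ξm - c / 2) *
      (∏ i, f c (u i) z) * (∏ i, f c (-u i) z) * l1 z * l2 (-z)
  + ((2 * z - c) / (2 * z)) * (z - ξp + c / 2) * (z - ξm + c / 2) *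
      (∏ i, f c z (u i)) * (∏ i, f c z (-u i)) * l1 (-z) * l2 z

/-- The reflection Bethe equation at `u_j`. -/
noncomputable def BetheEq (c ξp ξm : ℂ) (l1 l2 : ℂ → ℂ) {n : ℕ}
    (u : Fin n → ℂ) (j : Fin n) : Prop :=
  ((u j + ξp - c / 2) * (u j + ξm - c / 2) /
      ((u j - ξp + c / 2) * (u j - ξm + c / 2))) *
    (l1 (u j) * l2 (-u j) / (l1 (-u j) * l2 (u j)))
  = (∏ i ∈ univ.erase j, f c (u j) (u i)) * (∏ i ∈ univ.erase j, f c (u j) (-u i)) /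
      ((∏ i ∈ univ.erase j, f c (u i) (u j)) * ∏ i ∈ univ.erase j, f c (-u i) (u j))

noncomputable def T1 (c ξp ξm : ℂ) (l1 l2 : ℂ → ℂ) {n : ℕ}
    (u : Fin n → ℂ) (j : Fin n) (z : ℂ) : ℂ :=
  ((2 * z + c) / (2 * z)) * (z + ξp - c / 2) * (z + ξm - c / 2) *
      (∏ i ∈ univ.erase j, f c (u i) z) * (∏ i, f c (-u i) z) * l1 z * l2 (-z)

noncomputable def T2 (c ξp ξm : ℂ) (l1 l2 : ℂ → ℂ) {n : ℕ}
    (u : Fin n → ℂ) (j : Fin n) (z : ℂ) : ℂ :=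
  ((2 * z - c) / (2 * z)) * (z - ξp + c / 2) * (z - ξm + c / 2) *
      (∏ i ∈ univ.erase j, f c z (u i)) * (∏ i, f c z (-u i)) * l1 (-z) * l2 z

lemma tauhat_split (c ξp ξm : ℂ) (l1 l2 : ℂ → ℂ) {n : ℕ}
    (u : Fin n → ℂ) (j : Fin n) (z : ℂ) :
    tauhat c ξp ξm l1 l2 u z
      = T1 c ξp ξm l1 l2 u j z * f c (u j) z
        + T2 c ξp ξm l1 l2 u j z * f c z (u j) := by
  unfold tauhat T1 T2
  rw [← Finset.mul_prod_erase univ (fun i => f c (u i) z) (Finset.mem_univ j),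
      ← Finset.mul_prod_erase univ (fun i => f c z (u i)) (Finset.mem_univ j)]
  ring


lemma cont_f_right {c a x : ℂ} (h : a - x ≠ 0) : ContinuousAt (fun z => f c a z) x := by
  unfold f
  exact (((continuousAt_const.sub continuousAt_id).add continuousAt_const).div
    (continuousAt_const.sub continuousAt_id) (by simpa using h))

lemma cont_f_left {c a x : ℂ} (h : x - a ≠ 0) : ContinuousAt (fun z => f c z a) x := by
  unfold f
  exact (((continuousAt_id.sub continuousAt_const).add continuousAt_const).div
    (continuousAt_id.sub continuousAt_const) (by simpa using h))

lemma limit_lemma (c ξp ξm : ℂ) (n : ℕ) (u : Fin n → ℂ)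
    (hu0 : ∀ i, u i ≠ 0)
    (hupm : ∀ i j : Fin n, i ≠ j → u i ≠ u j ∧ u i ≠ -u j)
    (l1 l2 : ℂ → ℂ)
    (hreg : ∀ j, ContinuousAt l1 (u j) ∧ ContinuousAt l1 (-u j) ∧
      ContinuousAt l2 (u j) ∧ ContinuousAt l2 (-u j))
    (j : Fin n) :
    Tendsto (fun z => (z - u j) * tauhat c ξp ξm l1 l2 u z)
      (nhdsWithin (u j) {u j}ᶜ)
      (nhds (T1 c ξp ξm l1 l2 u j (u j) * (-c) + T2 c ξp ξm l1 l2 u j (u j) * c)) := by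
  have h2u : (2 : ℂ) * u j ≠ 0 := mul_ne_zero two_ne_zero (hu0 j)
  have hcontT1 : ContinuousAt (T1 c ξp ξm l1 l2 u j) (u j) := by
    unfold T1
    refine ContinuousAt.mul (ContinuousAt.mul (ContinuousAt.mul (ContinuousAt.mul
      (ContinuousAt.mul (ContinuousAt.mul ?_ ?_) ?_) ?_) ?_) ?_) ?_
    · exact ((continuousAt_const.mul continuousAt_id).add continuousAt_const).div
        (continuousAt_const.mul continuousAt_id) h2u
    · exact (continuousAt_id.add continuousAt_const).sub continuousAt_const
    · exact (continuousAt_id.add continuousAt_const).sub continuousAt_const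
    · exact tendsto_finset_prod _ fun i hi =>
        (cont_f_right (sub_ne_zero.mpr ((hupm i j (Finset.ne_of_mem_erase hi)).1))).tendsto
    · refine tendsto_finset_prod _ fun i _ => (cont_f_right ?_).tendsto
      by_cases hij : i = j
      · subst hij
        intro h
        apply hu0 i
        have : (2:ℂ) * u i = 0 := by linear_combination -h
        exact (mul_ne_zero two_ne_zero (hu0 i) this).elim
      · intro h
        exact (hupm j i (Ne.symm hij)).2 (by linear_combination -h)
    · exact (hreg j).1
    · exact ((hreg j).2.2.2).comp continuous_neg.continuousAt
  have hcontT2 : ContinuousAt (T2 c ξp ξm l1 l2 u j) (u j) := by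
    unfold T2
    refine ContinuousAt.mul (ContinuousAt.mul (ContinuousAt.mul (ContinuousAt.mul
      (ContinuousAt.mul (ContinuousAt.mul ?_ ?_) ?_) ?_) ?_) ?_) ?_
    · exact ((continuousAt_const.mul continuousAt_id).sub continuousAt_const).div
        (continuousAt_const.mul continuousAt_id) h2u
    · exact (continuousAt_id.sub continuousAt_const).add continuousAt_const
    · exact (continuousAt_id.sub continuousAt_const).add continuousAt_const
    · exact tendsto_finset_prod _ fun i hi =>
        (cont_f_left (sub_ne_zero.mpr (Ne.symm (hupm i j (Finset.ne_of_mem_erase hi)).1))).tendsto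
    · refine tendsto_finset_prod _ fun i _ => (cont_f_left ?_).tendsto
      by_cases hij : i = j
      · subst hij
        intro h
        apply mul_ne_zero (two_ne_zero (α := ℂ)) (hu0 i)
        linear_combination h
      · intro h
        exact (hupm j i (Ne.symm hij)).2 (by linear_combination h)
    · exact ((hreg j).2.1).comp continuous_neg.continuousAt
    · exact (hreg j).2.2.1
  have hcont : ContinuousAt (fun z => T1 c ξp ξm l1 l2 u j z * (z - u j - c)
      + T2 c ξp ξm l1 l2 u j z * (z - u j + c)) (u j) :=
    (hcontT1.mul ((continuousAt_id.sub continuousAt_const).sub continuousAt_const)).add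
      (hcontT2.mul ((continuousAt_id.sub continuousAt_const).add continuousAt_const))
  have hT := hcont.tendsto.mono_left (nhdsWithin_le_nhds (s := {u j}ᶜ))
  have hval : T1 c ξp ξm l1 l2 u j (u j) * (u j - u j - c)
      + T2 c ξp ξm l1 l2 u j (u j) * (u j - u j + c)
      = T1 c ξp ξm l1 l2 u j (u j) * (-c) + T2 c ξp ξm l1 l2 u j (u j) * c := by ring
  rw [hval] at hT
  refine hT.congr' ?_
  filter_upwards [self_mem_nhdsWithin] with z hz
  simp only [Set.mem_compl_iff, Set.mem_singleton_iff] at hz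
  have hd : u j - z ≠ 0 := sub_ne_zero.mpr (Ne.symm hz)
  have h1 : (z - u j) * f c (u j) z = z - u j - c := by
    unfold f; field_simp; ring
  have h2 : (z - u j) * f c z (u j) = z - u j + c := by
    unfold f
    rw [mul_div_assoc', mul_comm, mul_div_assoc, div_self (sub_ne_zero.mpr hz), mul_one]
  rw [tauhat_split c ξp ξm l1 l2 u j z]
  linear_combination (-(T1 c ξp ξm l1 l2 u j z)) * h1 + (-(T2 c ξp ξm l1 l2 u j z)) * h2


lemma value_zero (c ξp ξm : ℂ) (n : ℕ) (u : Fin n → ℂ)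
    (hu0 : ∀ i, u i ≠ 0)
    (hupm : ∀ i j : Fin n, i ≠ j → u i ≠ u j ∧ u i ≠ -u j)
    (hdiffc : ∀ i j : Fin n, i ≠ j → u i - u j ≠ c ∧ u i - u j ≠ -c)
    (hsumc : ∀ i j : Fin n, u i + u j ≠ c ∧ u i + u j ≠ -c)
    (hxi : ∀ j, u j - ξp + c / 2 ≠ 0 ∧ u j - ξm + c / 2 ≠ 0)
    (l1 l2 : ℂ → ℂ)
    (hnz : ∀ j, l1 (u j) ≠ 0 ∧ l1 (-u j) ≠ 0 ∧ l2 (u j) ≠ 0 ∧ l2 (-u j) ≠ 0)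
    (j : Fin n) (hB : BetheEq c ξp ξm l1 l2 u j) :
    T1 c ξp ξm l1 l2 u j (u j) * (-c) + T2 c ξp ξm l1 l2 u j (u j) * c = 0 := by
  have h2u : (2 : ℂ) * u j ≠ 0 := mul_ne_zero two_ne_zero (hu0 j)
  have hP1 : (∏ i ∈ univ.erase j, f c (u i) (u j)) ≠ 0 := by
    refine Finset.prod_ne_zero_iff.mpr fun i hi => ?_
    have hij := Finset.ne_of_mem_erase hi
    unfold f
    exact div_ne_zero (fun h => (hdiffc i j hij).2 (by linear_combination h))
      (sub_ne_zero.mpr (hupm i j hij).1)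
  have hQ1 : (∏ i ∈ univ.erase j, f c (-u i) (u j)) ≠ 0 := by
    refine Finset.prod_ne_zero_iff.mpr fun i hi => ?_
    have hij := Finset.ne_of_mem_erase hi
    unfold f
    refine div_ne_zero (fun h => (hsumc i j).1 (by linear_combination -h)) ?_
    intro h
    exact (hupm j i (Ne.symm hij)).2 (by linear_combination -h)
  have e1 : (∏ i, f c (-u i) (u j))
      = f c (-u j) (u j) * ∏ i ∈ univ.erase j, f c (-u i) (u j) :=
    (Finset.mul_prod_erase univ (fun i => f c (-u i) (u j)) (Finset.mem_univ j)).symm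
  have e2 : (∏ i, f c (u j) (-u i))
      = f c (u j) (-u j) * ∏ i ∈ univ.erase j, f c (u j) (-u i) :=
    (Finset.mul_prod_erase univ (fun i => f c (u j) (-u i)) (Finset.mem_univ j)).symm
  have f1 : f c (-u j) (u j) = (2 * u j - c) / (2 * u j) := by
    unfold f
    rw [show -u j - u j + c = -(2 * u j - c) by ring, show -u j - u j = -(2 * u j) by ring,
      neg_div_neg_eq]
  have f2 : f c (u j) (-u j) = (2 * u j + c) / (2 * u j) := by
    unfold f
    rw [show u j - -u j + c = 2 * u j + c by ring, show u j - -u j = 2 * u j by ring]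
  unfold BetheEq at hB
  unfold T1 T2
  rw [e1, e2, f1, f2]
  have hxp : ((u j - ξp) * 2 + c) ≠ 0 := fun h => (hxi j).1 (by linear_combination h / 2)
  have hxm : ((u j - ξm) * 2 + c) ≠ 0 := fun h => (hxi j).2 (by linear_combination h / 2)
  have hxp' : 2 * (u j - ξp) + c ≠ 0 := by intro h; exact hxp (by linear_combination h)
  have hxm' : 2 * (u j - ξm) + c ≠ 0 := by intro h; exact hxm (by linear_combination h)
  field_simp [hu0 j, (hxi j).1, (hxi j).2, (hnz j).2.1, (hnz j).2.2.1, hP1, hQ1, hxp', hxm'] at hB ⊢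
  linear_combination (-(c * (u j * 2 + c) * (u j * 2 - c))) * hB

/-- `τ̂(z|ū)` has a simple pole at each `z = u_j` (the limit of `(z-u_j)·τ̂(z|ū)`
exists), and if the reflection Bethe equations hold at each `u_j`, then the
residue of `τ̂(z|ū)` at `z = u_j` vanishes for every `j`. -/
theorem reflection_residue_vanishes (c ξp ξm : ℂ) (hc : c ≠ 0) (n : ℕ)
    (u : Fin n → ℂ)
    (hu0 : ∀ i, u i ≠ 0)
    (hupm : ∀ i j : Fin n, i ≠ j → u i ≠ u j ∧ u i ≠ -u j)
    (hdiffc : ∀ i j : Fin n, i ≠ j → u i - u j ≠ c ∧ u i - u j ≠ -c)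
    (hsumc : ∀ i j : Fin n, u i + u j ≠ c ∧ u i + u j ≠ -c)
    (hxi : ∀ j, u j - ξp + c / 2 ≠ 0 ∧ u j - ξm + c / 2 ≠ 0)
    (l1 l2 : ℂ → ℂ)
    (hreg : ∀ j, ContinuousAt l1 (u j) ∧ ContinuousAt l1 (-u j) ∧
      ContinuousAt l2 (u j) ∧ ContinuousAt l2 (-u j))
    (hnz : ∀ j, l1 (u j) ≠ 0 ∧ l1 (-u j) ≠ 0 ∧ l2 (u j) ≠ 0 ∧ l2 (-u j) ≠ 0) :
    (∀ j : Fin n, ∃ r : ℂ,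
        Tendsto (fun z => (z - u j) * tauhat c ξp ξm l1 l2 u z)
          (nhdsWithin (u j) {u j}ᶜ) (nhds r)) ∧
    ((∀ j : Fin n, BetheEq c ξp ξm l1 l2 u j) →
      ∀ j : Fin n,
        Tendsto (fun z => (z - u j) * tauhat c ξp ξm l1 l2 u z)
          (nhdsWithin (u j) {u j}ᶜ) (nhds 0)) := by
  constructor
  · intro j
    exact ⟨_, limit_lemma c ξp ξm n u hu0 hupm l1 l2 hreg j⟩
  · intro hBall j
    have h := limit_lemma c ξp ξm n u hu0 hupm l1 l2 hreg j
    rwa [value_zero c ξp ξm n u hu0 hupm hdiffc hsumc hxi l1 l2 hnz j (hBall j)] at h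

end Stmt13
end
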